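/- Let A ⊆ ℤ be a B₂[⌊g/2⌋] set (every integer has at most ⌊g/2⌋ representations as a sum of two elements of A up to order) and let ℐ be a Sidon system of finite integer sets. Then the family 𝒜 = {a + I : a ∈ A, I ∈ ℐ} is a B₂[g] system: every set S of integers has at most g representations as an unordered sumset of two members of 𝒜. -/

import Mathlib

/-!
Every member `a +ᵥ I` of the family has least element `a`, since `I` has least element `0`.
Taking least elements therefore sends a representation `S = X + Y` by members of the family to a
representation `min S = min X + min Y` by elements of `A`, and there are at most `⌊g/2⌋` of those.
Once `{a, b} = {min X, min Y}` is fixed, `I + J = S - (a + b)` is determined, so the Sidon property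
pins down `{I, J}`; the only freedom left is which of `I, J` goes with `a`. Each fibre of the
projection thus has at most two elements, giving at most `2 ⌊g/2⌋ ≤ g` representations.
-/

open Finset Pointwise

theorem IsLeast.add {M : Type*} [Add M] [Preorder M] [AddLeftMono M] [AddRightMono M]
    {s t : Set M} {a b : M} (ha : IsLeast s a) (hb : IsLeast t b) : IsLeast (s + t) (a + b) :=
  ⟨Set.add_mem_add ha.1 hb.1, add_mem_lowerBounds_add ha.2 hb.2⟩

theorem IsLeast.vadd_set {M : Type*} [Add M] [Preorder M] [AddLeftMono M]
    {s : Set M} {b : M} (a : M) (h : IsLeast s b) : IsLeast (a +ᵥ s) (a + b) :=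
  Monotone.map_isLeast (fun _ _ hxy => add_le_add_right hxy a) h

theorem Finset.pair_eq_pair_iff {α : Type*} [DecidableEq α] {x y z w : α} :
    ({x, y} : Finset α) = {z, w} ↔ x = z ∧ y = w ∨ x = w ∧ y = z := by
  rw [← coe_inj, coe_pair, coe_pair, Set.pair_eq_pair_iff]

section Representations

variable {G : Type*} [DecidableEq G]

def IsSidonSystem [Add G] (ℐ : Finset (Finset G)) : Prop :=
  ∀ I ∈ ℐ, ∀ J ∈ ℐ, ∀ L ∈ ℐ, ∀ M ∈ ℐ, I + J = L + M → ({I, J} : Finset (Finset G)) = {L, M}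

def translates [Add G] (A : Finset G) (ℐ : Finset (Finset G)) : Finset (Finset G) :=
  (A ×ˢ ℐ).image fun p => p.1 +ᵥ p.2

def sumReps {α : Type*} [DecidableEq α] [Add α] (𝒜 : Finset α) (s : α) : Finset (Sym2 α) :=
  ((𝒜 ×ˢ 𝒜).filter fun q => q.1 + q.2 = s).image fun q => s(q.1, q.2)

theorem exists_of_mem_sumReps_translates [Add G] {A : Finset G} {ℐ : Finset (Finset G)}
    {S : Finset G} {t : Sym2 (Finset G)} (ht : t ∈ sumReps (translates A ℐ) S) :
    ∃ a ∈ A, ∃ I ∈ ℐ, ∃ b ∈ A, ∃ J ∈ ℐ,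
      (a +ᵥ I) + (b +ᵥ J) = S ∧ t = s(a +ᵥ I, b +ᵥ J) := by
  simp only [sumReps, translates, mem_image, mem_filter, mem_product, Prod.exists] at ht
  obtain ⟨_, _, ⟨⟨⟨a, I, ⟨ha, hI⟩, rfl⟩, ⟨b, J, ⟨hb, hJ⟩, rfl⟩⟩, hS⟩, rfl⟩ := ht
  exact ⟨a, ha, I, hI, b, hb, J, hJ, hS, rfl⟩

theorem IsSidonSystem.translate_eq_or_eq [AddCommGroup G] {ℐ : Finset (Finset G)}
    (hℐ : IsSidonSystem ℐ) {I J K L : Finset G} (hI : I ∈ ℐ) (hJ : J ∈ ℐ) (hK : K ∈ ℐ)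
    (hL : L ∈ ℐ) {a b : G} (h : (a +ᵥ K) + (b +ᵥ L) = (a +ᵥ I) + (b +ᵥ J)) :
    s(a +ᵥ K, b +ᵥ L) = s(a +ᵥ I, b +ᵥ J) ∨ s(a +ᵥ K, b +ᵥ L) = s(a +ᵥ J, b +ᵥ I) := by
  rw [vadd_add_vadd, vadd_add_vadd, vadd_left_cancel_iff] at h
  rcases Finset.pair_eq_pair_iff.1 (hℐ K hK L hL I hI J hJ h) with ⟨rfl, rfl⟩ | ⟨rfl, rfl⟩
  · exact .inl rfl
  · exact .inr rfl

end Representations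

section Least

variable {G : Type*} [AddCommGroup G] [ConditionallyCompleteLinearOrder G] [IsOrderedAddMonoid G]
  [DecidableEq G] {A : Finset G} {ℐ : Finset (Finset G)}

theorem sInf_coe_vadd_finset {I : Finset G} (hI : IsLeast (I : Set G) 0) (a : G) :
    sInf (↑(a +ᵥ I) : Set G) = a := by
  simpa [coe_vadd_finset] using (hI.vadd_set a).csInf_eq

theorem sym2_map_sInf_mem_sumReps (hℐ : ∀ I ∈ ℐ, IsLeast (I : Set G) 0) {S : Finset G}
    {t : Sym2 (Finset G)} (ht : t ∈ sumReps (translates A ℐ) S) :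
    t.map (fun X : Finset G => sInf (X : Set G)) ∈ sumReps A (sInf (S : Set G)) := by
  obtain ⟨a, ha, I, hI, b, hb, J, hJ, rfl, rfl⟩ := exists_of_mem_sumReps_translates ht
  have hS : IsLeast (↑((a +ᵥ I) + (b +ᵥ J)) : Set G) (a + b) := by
    simpa [coe_add, coe_vadd_finset] using ((hℐ I hI).vadd_set a).add ((hℐ J hJ).vadd_set b)
  simp only [sumReps, mem_image, mem_filter, mem_product, Prod.exists, Sym2.map_mk,
    sInf_coe_vadd_finset (hℐ I hI), sInf_coe_vadd_finset (hℐ J hJ), hS.csInf_eq]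
  exact ⟨a, b, ⟨⟨ha, hb⟩, rfl⟩, rfl⟩

theorem card_filter_sym2_map_sInf_eq_le_two (hℐ : ∀ I ∈ ℐ, IsLeast (I : Set G) 0)
    (hSidon : IsSidonSystem ℐ) {S : Finset G} {t₀ : Sym2 (Finset G)}
    (ht₀ : t₀ ∈ sumReps (translates A ℐ) S) :
    #{t ∈ sumReps (translates A ℐ) S | t.map (fun X : Finset G => sInf (X : Set G)) =
      t₀.map (fun X : Finset G => sInf (X : Set G))} ≤ 2 := by
  obtain ⟨a, -, I, hI, b, -, J, hJ, hS₀, rfl⟩ := exists_of_mem_sumReps_translates ht₀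
  refine (card_le_card (t := {s(a +ᵥ I, b +ᵥ J), s(a +ᵥ J, b +ᵥ I)}) fun t ht => ?_).trans
    card_le_two
  obtain ⟨htS, hmap⟩ := mem_filter.1 ht
  obtain ⟨c, -, K, hK, d, -, L, hL, hS, rfl⟩ := exists_of_mem_sumReps_translates htS
  simp only [Sym2.map_mk, sInf_coe_vadd_finset (hℐ _ hI), sInf_coe_vadd_finset (hℐ _ hJ),
    sInf_coe_vadd_finset (hℐ _ hK), sInf_coe_vadd_finset (hℐ _ hL), Sym2.eq_iff] at hmap
  rw [mem_insert, mem_singleton]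
  rcases hmap with ⟨rfl, rfl⟩ | ⟨rfl, rfl⟩
  · exact hSidon.translate_eq_or_eq hI hJ hK hL (hS.trans hS₀.symm)
  · rw [Sym2.eq_swap]
    exact hSidon.translate_eq_or_eq hI hJ hL hK ((add_comm _ _).trans (hS.trans hS₀.symm))

end Least

theorem translate_system_is_B2g_general (g N : ℕ) (A : Finset ℤ) (ℐ : Finset (Finset ℤ))
    (hI : ∀ I ∈ ℐ, (0 : ℤ) ∈ I ∧ I ⊆ Finset.Icc (0 : ℤ) ((N : ℤ) / 2))
    (hB2 : ∀ n : ℤ,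
      (((A ×ˢ A).filter (fun p : ℤ × ℤ => p.1 + p.2 = n)).image (fun p => Sym2.mk p.1 p.2)).card ≤ g / 2)
    (hSidon : ∀ I ∈ ℐ, ∀ J ∈ ℐ, ∀ L ∈ ℐ, ∀ M ∈ ℐ,
      I + J = L + M → ({I, J} : Finset (Finset ℤ)) = {L, M}) :
    ∀ S : Finset ℤ,
      (((((A ×ˢ ℐ).image (fun p : ℤ × Finset ℤ => p.2.image (fun x => p.1 + x))) ×ˢ
         ((A ×ˢ ℐ).image (fun p : ℤ × Finset ℤ => p.2.image (fun x => p.1 + x)))).filter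
        (fun q : Finset ℤ × Finset ℤ => q.1 + q.2 = S)).image (fun q => Sym2.mk q.1 q.2)).card ≤ g := by
  intro S
  have hleast : ∀ I ∈ ℐ, IsLeast (I : Set ℤ) 0 := fun I hI' =>
    ⟨(hI I hI').1, fun x hx => (mem_Icc.1 ((hI I hI').2 hx)).1⟩
  change #(sumReps (translates A ℐ) S) ≤ g
  calc #(sumReps (translates A ℐ) S)
      ≤ 2 * #((sumReps (translates A ℐ) S).image (Sym2.map fun X : Finset ℤ => sInf (X : Set ℤ))) :=
        card_le_mul_card_image _ 2 <| forall_mem_image.2 fun _ ht =>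
          card_filter_sym2_map_sInf_eq_le_two hleast hSidon ht
    _ ≤ 2 * #(sumReps A (sInf (S : Set ℤ))) :=
        Nat.mul_le_mul_left 2 <| card_le_card <| image_subset_iff.2 fun _ ht =>
          sym2_map_sInf_mem_sumReps hleast ht
    _ ≤ g := by have := hB2 (sInf (S : Set ℤ)); unfold sumReps; omega

theorem translate_system_is_B2g (g N : ℕ) (A : Finset ℤ) (ℐ : Finset (Finset ℤ))
    (hA : A ⊆ Finset.Icc (1 : ℤ) ((N : ℤ) / 2))
    (hI : ∀ I ∈ ℐ, (0 : ℤ) ∈ I ∧ I ⊆ Finset.Icc (0 : ℤ) ((N : ℤ) / 2))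
    (hB2 : ∀ n : ℤ,
      (((A ×ˢ A).filter (fun p : ℤ × ℤ => p.1 + p.2 = n)).image (fun p => Sym2.mk p.1 p.2)).card ≤ g / 2)
    (hSidon : ∀ I ∈ ℐ, ∀ J ∈ ℐ, ∀ L ∈ ℐ, ∀ M ∈ ℐ,
      I + J = L + M → ({I, J} : Finset (Finset ℤ)) = {L, M}) :
    ∀ S : Finset ℤ,
      (((((A ×ˢ ℐ).image (fun p : ℤ × Finset ℤ => p.2.image (fun x => p.1 + x))) ×ˢ
         ((A ×ˢ ℐ).image (fun p : ℤ × Finset ℤ => p.2.image (fun x => p.1 + x)))).filter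
        (fun q : Finset ℤ × Finset ℤ => q.1 + q.2 = S)).image (fun q => Sym2.mk q.1 q.2)).card ≤ g :=
  translate_system_is_B2g_general g N A ℐ hI hB2 hSidon
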